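/- For all α ∈ (0,1] and all n ∈ ℕ with h = 1/n, there exists a real symmetric matrix R_n with ‖R_n‖₂ ≤ α/(3π n²(3-α)) such that h^{α} T_n(|θ|^{2-α}) ≤ T_n(|θ|²) + R_n in the Loewner order. -/

import Mathlib

open MeasureTheory Matrix
open scoped ComplexOrder

noncomputable def tFourierCoeff (f : ℝ → ℂ) (k : ℤ) : ℂ :=
  (1 / (2 * Real.pi)) * ∫ θ in (-Real.pi)..Real.pi, f θ * Complex.exp (-Complex.I * k * θ)

noncomputable def toeplitz (n : ℕ) (f : ℝ → ℂ) : Matrix (Fin n) (Fin n) ℂ :=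
  Matrix.of fun s t => tFourierCoeff f ((s : ℤ) - (t : ℤ))

open scoped Matrix.Norms.L2Operator

/-!
Take ψ = χ_{[-h,h]} (|θ|^{2-α} h^α - |θ|²) (`correctionSymbol α h`). The symbol
g = |θ|² + ψ - h^α |θ|^{2-α} vanishes on [-h, h] and is nonnegative outside, where |θ|^α ≥ h^α.
Since xᴴ T_n(g) x = (1/2π) ∫ g |∑ₜ xₜ e^{itθ}|², the matrix
T_n(g) = T_n(|θ|²) + T_n(ψ) - h^α T_n(|θ|^{2-α}) is positive semidefinite, so R = T_n(ψ) works.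
As ψ is even, real and nonnegative, R is real symmetric with entries bounded by
(1/2π) ∫ ψ = h³α / (3π(3 - α)); an n × n matrix with entries bounded by c has spectral norm at
most n c, which gives ‖R‖ ≤ α / (3π n² (3 - α)) for h = 1/n.
-/

open scoped ComplexConjugate

lemma IntervalIntegrable.ofReal {g : ℝ → ℝ} {μ : Measure ℝ} {a b : ℝ}
    (hg : IntervalIntegrable g μ a b) : IntervalIntegrable (fun x => (g x : ℂ)) μ a b :=
  ⟨hg.1.ofReal, hg.2.ofReal⟩

lemma intervalIntegral.integral_indicator_Icc {E : Type*} [NormedAddCommGroup E] [NormedSpace ℝ E]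
    {f : ℝ → E} {a b c d : ℝ} (hac : a < c) (hcd : c ≤ d) (hdb : d ≤ b) :
    ∫ x in a..b, (Set.Icc c d).indicator f x = ∫ x in c..d, f x := by
  rw [intervalIntegral.integral_of_le (by linarith), intervalIntegral.integral_of_le hcd,
    setIntegral_indicator measurableSet_Icc,
    Set.inter_eq_self_of_subset_right (Set.Icc_subset_Ioc_iff hcd |>.mpr ⟨hac, hdb⟩),
    integral_Icc_eq_integral_Ioc]

lemma intervalIntegral.integral_neg_self_eq_two_smul_of_even {E : Type*} [NormedAddCommGroup E]
    [NormedSpace ℝ E] {f : ℝ → E} {a : ℝ} (hf : ∀ x, f (-x) = f x)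
    (hi : IntervalIntegrable f volume (-a) a) :
    ∫ x in -a..a, f x = (2 : ℝ) • ∫ x in 0..a, f x := by
  have hneg : ∫ x in -a..0, f x = ∫ x in 0..a, f x := by
    simpa [hf] using (intervalIntegral.integral_comp_neg (a := 0) (b := a) f).symm
  rw [← intervalIntegral.integral_add_adjacent_intervals (b := 0)
    (hi.mono_set (Set.uIcc_subset_uIcc_left (by simp [Set.uIcc, le_total])))
    (hi.mono_set (Set.uIcc_subset_uIcc_right (by simp [Set.uIcc, le_total]))), hneg, two_smul]

lemma rpow_two_eq_rpow_sub_mul_rpow {x : ℝ} (hx : 0 ≤ x) (α : ℝ) :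
    x ^ (2 : ℝ) = x ^ (2 - α) * x ^ α := by
  rw [← Real.rpow_add' hx (by norm_num), sub_add_cancel]

lemma intervalIntegrable_abs_rpow {p : ℝ} (hp : -1 < p) (a b : ℝ) :
    IntervalIntegrable (fun x : ℝ => |x| ^ p) volume a b :=
  intervalIntegrable_of_even (fun x => by rw [abs_neg]) (fun x hx =>
    (intervalIntegral.intervalIntegrable_rpow' hp).congr
      (fun y hy => by simp [abs_of_nonneg (Set.uIoc_of_le hx.le ▸ hy).1.le])) (a := a) (b := b)

lemma integral_abs_rpow {p a : ℝ} (hp : -1 < p) (ha : 0 ≤ a) :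
    ∫ x in -a..a, |x| ^ p = 2 * a ^ (p + 1) / (p + 1) := by
  rw [intervalIntegral.integral_neg_self_eq_two_smul_of_even (fun x => by rw [abs_neg])
    (intervalIntegrable_abs_rpow hp _ _), smul_eq_mul,
    intervalIntegral.integral_congr (g := fun x => x ^ p) fun x hx => by
      rw [Set.uIcc_of_le ha] at hx; simp [abs_of_nonneg hx.1],
    integral_rpow (Or.inl hp), Real.zero_rpow (by linarith)]
  ring

lemma EuclideanSpace.sq_sum_norm_le {𝕜 ι : Type*} [RCLike 𝕜] [Fintype ι] (x : EuclideanSpace 𝕜 ι) :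
    (∑ i, ‖x i‖) ^ 2 ≤ Fintype.card ι * ‖x‖ ^ 2 := by
  simpa [EuclideanSpace.norm_sq_eq] using
    sq_sum_le_card_mul_sum_sq (s := Finset.univ) (f := fun i => ‖x i‖)

lemma Matrix.l2_opNorm_le_card_mul_of_norm_le {𝕜 ι : Type*} [RCLike 𝕜] [Fintype ι] [DecidableEq ι]
    (A : Matrix ι ι 𝕜) {c : ℝ} (hc : 0 ≤ c) (hA : ∀ i j, ‖A i j‖ ≤ c) :
    ‖A‖ ≤ Fintype.card ι * c := by
  rw [← l2_opNorm_toEuclideanCLM]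
  refine ContinuousLinearMap.opNorm_le_bound _ (by positivity) fun x => ?_
  have hrow : ∀ i, ‖(A *ᵥ x) i‖ ≤ c * ∑ j, ‖x j‖ := fun i => calc
    ‖∑ j, A i j * x j‖ ≤ ∑ j, ‖A i j‖ * ‖x j‖ := by
      simpa only [norm_mul] using norm_sum_le Finset.univ fun j => A i j * x j
    _ ≤ c * ∑ j, ‖x j‖ := by
      rw [Finset.mul_sum]
      exact Finset.sum_le_sum fun j _ => mul_le_mul_of_nonneg_right (hA i j) (norm_nonneg _)
  rw [← pow_le_pow_iff_left₀ (norm_nonneg _) (by positivity) two_ne_zero, EuclideanSpace.norm_sq_eq]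
  calc ∑ i, ‖(A *ᵥ x) i‖ ^ 2 ≤ ∑ _i : ι, c ^ 2 * (Fintype.card ι * ‖x‖ ^ 2) := by
        refine Finset.sum_le_sum fun i _ => ?_
        calc ‖(A *ᵥ x) i‖ ^ 2 ≤ (c * ∑ j, ‖x j‖) ^ 2 := by gcongr; exact hrow i
          _ = c ^ 2 * (∑ j, ‖x j‖) ^ 2 := mul_pow _ _ _
          _ ≤ c ^ 2 * (Fintype.card ι * ‖x‖ ^ 2) := by gcongr; exact x.sq_sum_norm_le
    _ = (Fintype.card ι * c * ‖x‖) ^ 2 := by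
        rw [Finset.sum_const, Finset.card_univ, nsmul_eq_mul]
        ring

section FourierCoeff

variable {f g : ℝ → ℂ}

lemma IntervalIntegrable.mul_cexp_neg_I_mul (hf : IntervalIntegrable f volume (-Real.pi) Real.pi)
    (k : ℤ) :
    IntervalIntegrable (fun θ : ℝ => f θ * Complex.exp (-Complex.I * k * θ))
      volume (-Real.pi) Real.pi :=
  hf.mul_continuousOn (Complex.continuous_exp.comp (by fun_prop)).continuousOn

lemma tFourierCoeff_add (hf : IntervalIntegrable f volume (-Real.pi) Real.pi)
    (hg : IntervalIntegrable g volume (-Real.pi) Real.pi) (k : ℤ) :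
    tFourierCoeff (f + g) k = tFourierCoeff f k + tFourierCoeff g k := by
  simp only [tFourierCoeff, Pi.add_apply, add_mul,
    intervalIntegral.integral_add (hf.mul_cexp_neg_I_mul k) (hg.mul_cexp_neg_I_mul k), mul_add]

lemma tFourierCoeff_sub (hf : IntervalIntegrable f volume (-Real.pi) Real.pi)
    (hg : IntervalIntegrable g volume (-Real.pi) Real.pi) (k : ℤ) :
    tFourierCoeff (f - g) k = tFourierCoeff f k - tFourierCoeff g k := by
  simp only [tFourierCoeff, Pi.sub_apply, sub_mul,
    intervalIntegral.integral_sub (hf.mul_cexp_neg_I_mul k) (hg.mul_cexp_neg_I_mul k), mul_sub]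

lemma tFourierCoeff_smul (c : ℝ) (f : ℝ → ℂ) (k : ℤ) :
    tFourierCoeff (c • f) k = c • tFourierCoeff f k := by
  simp only [tFourierCoeff, Pi.smul_apply, smul_mul_assoc, intervalIntegral.integral_smul,
    mul_smul_comm]

lemma conj_tFourierCoeff (f : ℝ → ℂ) (k : ℤ) :
    conj (tFourierCoeff f k) = tFourierCoeff (fun θ => conj (f θ)) (-k) := by
  simp only [tFourierCoeff, map_mul, ← intervalIntegral.intervalIntegral_conj,
    ← Complex.exp_conj, map_neg, Complex.conj_I, map_intCast, Complex.conj_ofReal, map_div₀, map_one, map_ofNat, Int.cast_neg]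
  congr 2
  funext θ
  ring_nf

lemma tFourierCoeff_neg_of_even (hf : ∀ θ, f (-θ) = f θ) (k : ℤ) :
    tFourierCoeff f (-k) = tFourierCoeff f k := by
  rw [tFourierCoeff, ← neg_neg Real.pi, ← intervalIntegral.integral_comp_neg, neg_neg]
  simp only [hf, tFourierCoeff, Int.cast_neg, Complex.ofReal_neg]
  ring_nf

lemma norm_tFourierCoeff_le (f : ℝ → ℂ) (k : ℤ) :
    ‖tFourierCoeff f k‖ ≤ 1 / (2 * Real.pi) * ∫ θ in (-Real.pi)..Real.pi, ‖f θ‖ := by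
  have hπ := Real.pi_pos
  have hexp : ∀ θ : ℝ, ‖f θ * Complex.exp (-Complex.I * k * θ)‖ = ‖f θ‖ := fun θ => by
    rw [norm_mul, Complex.norm_exp]
    simp
  rw [tFourierCoeff, norm_mul, ← intervalIntegral.integral_congr (fun θ _ => hexp θ)]
  refine mul_le_mul (by simp [abs_of_pos hπ]) (intervalIntegral.norm_integral_le_integral_norm
    (by linarith)) (norm_nonneg _) (by positivity)

end FourierCoeff

section Toeplitz

variable {n : ℕ} {f g : ℝ → ℂ}

lemma toeplitz_add (hf : IntervalIntegrable f volume (-Real.pi) Real.pi)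
    (hg : IntervalIntegrable g volume (-Real.pi) Real.pi) :
    toeplitz n (f + g) = toeplitz n f + toeplitz n g := by
  ext s t
  exact tFourierCoeff_add hf hg _

lemma toeplitz_sub (hf : IntervalIntegrable f volume (-Real.pi) Real.pi)
    (hg : IntervalIntegrable g volume (-Real.pi) Real.pi) :
    toeplitz n (f - g) = toeplitz n f - toeplitz n g := by
  ext s t
  exact tFourierCoeff_sub hf hg _

lemma toeplitz_smul (c : ℝ) (f : ℝ → ℂ) : toeplitz n (c • f) = c • toeplitz n f := by
  ext s t
  exact tFourierCoeff_smul c f _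

lemma toeplitz_conjTranspose (f : ℝ → ℂ) :
    (toeplitz n f)ᴴ = toeplitz n (fun θ => conj (f θ)) := by
  ext s t
  simp only [conjTranspose_apply, toeplitz, of_apply, RCLike.star_def, conj_tFourierCoeff, neg_sub]

lemma toeplitz_transpose_of_even (hf : ∀ θ, f (-θ) = f θ) : (toeplitz n f)ᵀ = toeplitz n f := by
  ext s t
  rw [transpose_apply, toeplitz, of_apply, of_apply, ← neg_sub, tFourierCoeff_neg_of_even hf]

lemma toeplitz_ofReal_isHermitian (g : ℝ → ℝ) : (toeplitz n (fun θ => (g θ : ℂ))).IsHermitian := by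
  simp only [IsHermitian, toeplitz_conjTranspose, Complex.conj_ofReal]

lemma im_toeplitz_ofReal_of_even {g : ℝ → ℝ} (hg : ∀ θ, g (-θ) = g θ) (s t : Fin n) :
    (toeplitz n (fun θ => (g θ : ℂ)) s t).im = 0 := by
  rw [← Complex.conj_eq_iff_im, ← RCLike.star_def, (toeplitz_ofReal_isHermitian g).apply t s,
    ← transpose_apply (toeplitz n _), toeplitz_transpose_of_even (by simp [hg])]

end Toeplitz

section QuadraticForm

variable {n : ℕ}

noncomputable def trigPolynomial (x : Fin n → ℂ) (θ : ℝ) : ℂ :=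
  ∑ t, x t * Complex.exp (Complex.I * (t : ℕ) * θ)

lemma conj_trigPolynomial_mul_self (x : Fin n → ℂ) (θ : ℝ) :
    conj (trigPolynomial x θ) * trigPolynomial x θ
      = ∑ s, ∑ t, conj (x s) * x t * Complex.exp (-Complex.I * ((s : ℤ) - (t : ℤ) : ℤ) * θ) := by
  simp only [trigPolynomial, map_sum, map_mul, ← Complex.exp_conj, Finset.sum_mul_sum]
  refine Finset.sum_congr rfl fun s _ => Finset.sum_congr rfl fun t _ => ?_
  rw [mul_mul_mul_comm, ← Complex.exp_add]
  simp only [Complex.conj_I, map_natCast, Complex.conj_ofReal]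
  push_cast
  ring_nf

lemma star_dotProduct_toeplitz_mulVec {f : ℝ → ℂ}
    (hf : IntervalIntegrable f volume (-Real.pi) Real.pi) (x : Fin n → ℂ) :
    star x ⬝ᵥ toeplitz n f *ᵥ x = 1 / (2 * Real.pi) *
      ∫ θ in (-Real.pi)..Real.pi, f θ * (conj (trigPolynomial x θ) * trigPolynomial x θ) := by
  have hint : ∀ s t : Fin n, IntervalIntegrable
      (fun θ : ℝ => conj (x s) * x t *
        (f θ * Complex.exp (-Complex.I * ((s : ℤ) - (t : ℤ) : ℤ) * θ))) volume (-Real.pi) Real.pi :=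
    fun s t => (hf.mul_cexp_neg_I_mul _).const_mul _
  have hsum : ∀ θ : ℝ, f θ * ∑ s, ∑ t, conj (x s) * x t *
        Complex.exp (-Complex.I * ((s : ℤ) - (t : ℤ) : ℤ) * θ)
      = ∑ s, ∑ t, conj (x s) * x t *
        (f θ * Complex.exp (-Complex.I * ((s : ℤ) - (t : ℤ) : ℤ) * θ)) := fun θ => by
    simp only [Finset.mul_sum]
    exact Finset.sum_congr rfl fun s _ => Finset.sum_congr rfl fun t _ => by ring
  simp only [conj_trigPolynomial_mul_self, hsum]
  rw [intervalIntegral.integral_finsetSum fun s _ => by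
    simpa only [Finset.sum_fn] using IntervalIntegrable.sum Finset.univ fun t _ => hint s t]
  simp only [intervalIntegral.integral_finsetSum fun t _ => hint _ t,
    intervalIntegral.integral_const_mul, Finset.mul_sum]
  simp only [dotProduct, mulVec, Pi.star_apply, RCLike.star_def, Finset.mul_sum, toeplitz, of_apply,
    tFourierCoeff]
  refine Finset.sum_congr rfl fun s _ => Finset.sum_congr rfl fun t _ => ?_
  ring

end QuadraticForm

lemma toeplitz_ofReal_posSemidef {n : ℕ} {g : ℝ → ℝ} (hg : ∀ θ, 0 ≤ g θ)
    (hgi : IntervalIntegrable g volume (-Real.pi) Real.pi) :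
    (toeplitz n (fun θ => (g θ : ℂ))).PosSemidef := by
  refine .of_dotProduct_mulVec_nonneg (toeplitz_ofReal_isHermitian g) fun x => ?_
  simp only [star_dotProduct_toeplitz_mulVec hgi.ofReal x, ← Complex.normSq_eq_conj_mul_self,
    ← Complex.ofReal_mul, intervalIntegral.integral_ofReal]
  have hint : 0 ≤ ∫ θ in (-Real.pi)..Real.pi, g θ * Complex.normSq (trigPolynomial x θ) :=
    intervalIntegral.integral_nonneg (by linarith [Real.pi_pos])
      fun θ _ => mul_nonneg (hg θ) (Complex.normSq_nonneg _)
  rw [show (1 / (2 * Real.pi) : ℂ) = ((1 / (2 * Real.pi) : ℝ) : ℂ) by push_cast; rfl,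
    ← Complex.ofReal_mul, Complex.zero_le_real]
  exact mul_nonneg (by positivity) hint

lemma l2_opNorm_toeplitz_ofReal_le {n : ℕ} {g : ℝ → ℝ} (hg : ∀ θ, 0 ≤ g θ) :
    ‖toeplitz n (fun θ => (g θ : ℂ))‖
      ≤ n * (1 / (2 * Real.pi) * ∫ θ in (-Real.pi)..Real.pi, g θ) := by
  have hint : 0 ≤ ∫ θ in (-Real.pi)..Real.pi, g θ :=
    intervalIntegral.integral_nonneg (by linarith [Real.pi_pos]) fun θ _ => hg θ
  have hnorm : ∫ θ in (-Real.pi)..Real.pi, ‖(g θ : ℂ)‖ = ∫ θ in (-Real.pi)..Real.pi, g θ := by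
    simp only [Complex.norm_real, Real.norm_of_nonneg (hg _)]
  simpa only [Fintype.card_fin] using
    Matrix.l2_opNorm_le_card_mul_of_norm_le (toeplitz n fun θ => (g θ : ℂ))
      (mul_nonneg (by positivity) hint)
      fun s t => (norm_tFourierCoeff_le _ _).trans_eq (by rw [hnorm])

noncomputable def correctionSymbol (α h : ℝ) : ℝ → ℝ :=
  (Set.Icc (-h) h).indicator fun θ => |θ| ^ (2 - α) * h ^ α - |θ| ^ (2 : ℝ)

section CorrectionSymbol

variable {α h : ℝ}

lemma correctionSymbol_neg (α h θ : ℝ) : correctionSymbol α h (-θ) = correctionSymbol α h θ := by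
  simp only [correctionSymbol, Set.indicator, Set.mem_Icc, abs_neg, neg_le_neg_iff, neg_le,
    and_comm]

lemma correctionSymbol_nonneg (hα : 0 ≤ α) (θ : ℝ) : 0 ≤ correctionSymbol α h θ := by
  refine Set.indicator_nonneg (fun x hx => ?_) θ
  rw [sub_nonneg, rpow_two_eq_rpow_sub_mul_rpow (abs_nonneg _) α]
  gcongr
  exact abs_le.mpr hx

lemma rpow_mul_abs_rpow_le_add_correctionSymbol (hα : 0 ≤ α) (hh : 0 ≤ h) (θ : ℝ) :
    h ^ α * |θ| ^ (2 - α) ≤ |θ| ^ (2 : ℝ) + correctionSymbol α h θ := by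
  by_cases hθ : θ ∈ Set.Icc (-h) h
  · rw [correctionSymbol, Set.indicator_of_mem hθ]
    linarith
  · rw [correctionSymbol, Set.indicator_of_notMem hθ, add_zero,
      rpow_two_eq_rpow_sub_mul_rpow (abs_nonneg _) α, mul_comm]
    have : h < |θ| := lt_abs.mpr <| by
      simp only [Set.mem_Icc, not_and_or, not_le] at hθ
      rcases hθ with hθ | hθ
      · exact Or.inr (by linarith)
      · exact Or.inl hθ
    gcongr

lemma intervalIntegrable_correctionSymbol (hα : α < 3) (a b : ℝ) :
    IntervalIntegrable (correctionSymbol α h) volume a b := by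
  have hi : IntervalIntegrable (fun θ => |θ| ^ (2 - α) * h ^ α - |θ| ^ (2 : ℝ)) volume (-h) h :=
    ((intervalIntegrable_abs_rpow (by linarith) _ _).mul_const _).sub
      (intervalIntegrable_abs_rpow (by norm_num) _ _)
  exact ((((intervalIntegrable_iff' (by finiteness)).1 hi).mono_set Set.Icc_subset_uIcc)
    |>.integrable_indicator measurableSet_Icc).intervalIntegrable

lemma integral_correctionSymbol (hα : α < 3) (hh : 0 ≤ h) (hhπ : h < Real.pi) :
    ∫ θ in (-Real.pi)..Real.pi, correctionSymbol α h θ = 2 * h ^ 3 * α / (3 * (3 - α)) := by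
  have hi := intervalIntegrable_abs_rpow (p := 2 - α) (by linarith)
  have hi2 := intervalIntegrable_abs_rpow (p := 2) (by norm_num)
  rw [correctionSymbol, intervalIntegral.integral_indicator_Icc (by linarith) (by linarith) hhπ.le,
    intervalIntegral.integral_sub ((hi _ _).mul_const _) (hi2 _ _),
    intervalIntegral.integral_mul_const, integral_abs_rpow (by linarith) hh,
    integral_abs_rpow (by norm_num) hh]
  have h3 : h ^ (2 - α + 1) * h ^ α = h ^ 3 := by
    rw [← Real.rpow_add' hh (by ring_nf; norm_num), show 2 - α + 1 + α = ((3 : ℕ) : ℝ) by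
      push_cast; ring, Real.rpow_natCast]
  have h3' : h ^ ((2 : ℝ) + 1) = h ^ 3 := by norm_num
  have : (3 : ℝ) - α ≠ 0 := by linarith
  rw [div_mul_eq_mul_div, mul_assoc, h3, h3', show (2 : ℝ) - α + 1 = 3 - α by ring]
  field_simp
  ring

end CorrectionSymbol

section Comparison

variable {α : ℝ}

lemma l2_opNorm_toeplitz_correctionSymbol_le (hα₀ : 0 ≤ α) (hα₃ : α < 3) (n : ℕ) :
    ‖toeplitz n (fun θ => (correctionSymbol α (1 / n) θ : ℂ))‖
      ≤ α / (3 * Real.pi * n ^ 2 * (3 - α)) := by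
  have hπ : 1 / (n : ℝ) < Real.pi := by
    rw [one_div]
    linarith [Nat.cast_inv_le_one (α := ℝ) n, Real.pi_gt_three]
  refine (l2_opNorm_toeplitz_ofReal_le (correctionSymbol_nonneg hα₀)).trans_eq ?_
  rw [integral_correctionSymbol hα₃ (by positivity) hπ]
  rcases eq_or_ne (n : ℝ) 0 with hn | hn
  · simp [hn]
  · have : (3 : ℝ) - α ≠ 0 := by linarith
    field_simp

lemma toeplitz_sq_add_correctionSymbol_sub_posSemidef {h : ℝ} (hα₀ : 0 ≤ α) (hα₃ : α < 3)
    (hh : 0 ≤ h) (n : ℕ) :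
    (toeplitz n (fun θ => ((|θ| ^ (2 : ℝ) : ℝ) : ℂ))
        + toeplitz n (fun θ => (correctionSymbol α h θ : ℂ))
        - (h ^ α : ℝ) • toeplitz n (fun θ => ((|θ| ^ (2 - α) : ℝ) : ℂ))).PosSemidef := by
  have hsq := intervalIntegrable_abs_rpow (p := 2) (by norm_num) (-Real.pi) Real.pi
  have hpow := intervalIntegrable_abs_rpow (p := 2 - α) (by linarith) (-Real.pi) Real.pi
  have hψ := intervalIntegrable_correctionSymbol (h := h) hα₃ (-Real.pi) Real.pi
  rw [← toeplitz_add hsq.ofReal hψ.ofReal, ← toeplitz_smul,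
    ← toeplitz_sub (f := _ + _) (hsq.ofReal.add hψ.ofReal) (hpow.ofReal.smul _)]
  convert toeplitz_ofReal_posSemidef
    (g := fun θ => |θ| ^ (2 : ℝ) + correctionSymbol α h θ - h ^ α * |θ| ^ (2 - α))
    (fun θ => by linarith [rpow_mul_abs_rpow_le_add_correctionSymbol hα₀ hh θ])
    ((hsq.add hψ).sub (hpow.const_mul _)) using 2
  funext θ
  simp [Complex.real_smul]

end Comparison

theorem toeplitz_rpow_comparison_general
    (α : ℝ) (hα : α ∈ Set.Ioc (0 : ℝ) 1)
    (n : ℕ) (h : ℝ) (hh : h = 1 / n) :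
    ∃ R : Matrix (Fin n) (Fin n) ℂ,
      Rᵀ = R ∧ (∀ s t, (R s t).im = 0) ∧
      ‖R‖ ≤ α / (3 * Real.pi * n ^ 2 * (3 - α)) ∧
      (toeplitz n (fun θ => ((|θ| ^ (2 : ℝ) : ℝ) : ℂ)) + R -
        (h ^ α : ℝ) • toeplitz n (fun θ => ((|θ| ^ (2 - α) : ℝ) : ℂ))).PosSemidef := by
  obtain ⟨hα₀, hα₁⟩ := hα
  have hα₃ : α < 3 := by linarith
  subst hh
  exact ⟨toeplitz n (fun θ => (correctionSymbol α (1 / n) θ : ℂ)),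
    toeplitz_transpose_of_even (by simp [correctionSymbol_neg]),
    im_toeplitz_ofReal_of_even (correctionSymbol_neg α _),
    l2_opNorm_toeplitz_correctionSymbol_le hα₀.le hα₃ n,
    toeplitz_sq_add_correctionSymbol_sub_posSemidef hα₀.le hα₃ (by positivity) n⟩

theorem toeplitz_rpow_comparison
    (α : ℝ) (hα : α ∈ Set.Ioc (0 : ℝ) 1)
    (n : ℕ) (hn : 0 < n) (h : ℝ) (hh : h = 1 / n) :
    ∃ R : Matrix (Fin n) (Fin n) ℂ,
      Rᵀ = R ∧ (∀ s t, (R s t).im = 0) ∧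
      ‖R‖ ≤ α / (3 * Real.pi * n ^ 2 * (3 - α)) ∧
      (toeplitz n (fun θ => ((|θ| ^ (2 : ℝ) : ℝ) : ℂ)) + R -
        (h ^ α : ℝ) • toeplitz n (fun θ => ((|θ| ^ (2 - α) : ℝ) : ℂ))).PosSemidef :=
  toeplitz_rpow_comparison_general α hα n h hh
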